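/- arXiv:1701.05436 — 4 statements merged into one kernel-verified Lean document; each statement's English description precedes it below -/
import Mathlib

section
/- Let N ≥ 1, T > 0, let H_C : ℝ → Mat_{N×N}(ℂ) be a continuous family of Hermitian matrices, and let U_C : ℝ → Mat_{N×N}(ℂ) be a differentiable family of unitary matrices with U_C'(τ) = −i H_C(τ) U_C(τ) and U_C(0) = 𝟙. Let Q ≠ 0 be a Hermitian N×N matrix and set Q̃(τ) := U_C(τ) Q U_C(τ)*. If the decoupling condition ∫₀ᵀ Q̃(τ) dτ = 0 holds, then ∫₀ᵀ ‖H_C(t)‖ dt ≥ 1/2, where ‖·‖ is the operator norm. In particular, the action exerted by the control operator during a single period is at least of order unity. -/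
open intervalIntegral
open scoped Matrix Matrix.Norms.L2Operator

/-- If `U_C` is the unitary propagator of a continuous family `H_C` of Hermitian
`N×N` matrices, `Q ≠ 0` is Hermitian, `Q̃(τ) = U_C(τ) Q U_C(τ)*`, and the decoupling condition
`∫₀ᵀ Q̃(τ) dτ = 0` holds, then `∫₀ᵀ ‖H_C(t)‖ dt ≥ 1/2`, where `‖·‖` is the operator norm
induced by the Euclidean norm on `ℂ^N`. -/
theorem control_action_lower_bound
    (N : ℕ) (hN : 1 ≤ N) (T : ℝ) (hT : 0 < T)
    (HC UC : ℝ → Matrix (Fin N) (Fin N) ℂ)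
    (hHCcont : Continuous HC)
    (hHCherm : ∀ τ, (HC τ).IsHermitian)
    (hUCunitary : ∀ τ, UC τ ∈ Matrix.unitaryGroup (Fin N) ℂ)
    (hUC' : ∀ τ : ℝ, HasDerivAt UC (-Complex.I • (HC τ * UC τ)) τ)
    (hUC0 : UC 0 = 1)
    (Q : Matrix (Fin N) (Fin N) ℂ) (hQherm : Q.IsHermitian) (hQ : Q ≠ 0)
    (Qt : ℝ → Matrix (Fin N) (Fin N) ℂ)
    (hQt : ∀ τ, Qt τ = UC τ * Q * (UC τ)ᴴ)
    (hdec : ∫ τ in (0 : ℝ)..T, Qt τ = 0) :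
    (1 : ℝ) / 2 ≤ ∫ t in (0 : ℝ)..T, ‖HC t‖ := by
  haveI : Nonempty (Fin N) := ⟨⟨0, hN⟩⟩
  set A : ℝ := ∫ t in (0 : ℝ)..T, ‖HC t‖ with hA
  have hQnorm : (0 : ℝ) < ‖Q‖ := norm_pos_iff.mpr hQ
  -- derivative of Qt
  have hQt' : ∀ τ, HasDerivAt Qt (-Complex.I • (HC τ * Qt τ - Qt τ * HC τ)) τ := by
    intro τ
    have h1 := hUC' τ
    have h2 : HasDerivAt (fun s => (UC s)ᴴ) (-Complex.I • (HC τ * UC τ))ᴴ τ := by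
      have := ((starL' ℝ : Matrix (Fin N) (Fin N) ℂ ≃L[ℝ] Matrix (Fin N) (Fin N) ℂ)
        |>.toContinuousLinearMap.hasFDerivAt.comp_hasDerivAt τ h1)
      simp [Matrix.star_eq_conjTranspose] at this ⊢; exact this
    have h3 := (h1.mul_const Q).mul h2
    have heq : -Complex.I • (HC τ * UC τ) * Q * (UC τ)ᴴ
        + UC τ * Q * (-Complex.I • (HC τ * UC τ))ᴴ
        = -Complex.I • (HC τ * Qt τ - Qt τ * HC τ) := by
      rw [hQt τ]
      simp only [Matrix.conjTranspose_smul, Matrix.conjTranspose_mul, (hHCherm τ).eq,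
        smul_sub, Matrix.smul_mul, Matrix.mul_smul, mul_assoc]
      rw [sub_eq_add_neg]
      congr 1
      simp [← smul_assoc, smul_smul]
    rw [heq] at h3
    have hfun : (fun s => UC s * Q * (UC s)ᴴ) = Qt := by
      funext s; rw [hQt s]
    exact hfun ▸ h3
  have hQtcont : Continuous Qt := by
    rw [continuous_iff_continuousAt]; exact fun τ => (hQt' τ).continuousAt
  -- norm of Qt τ equals norm of Q
  have hQtnorm : ∀ τ, ‖Qt τ‖ = ‖Q‖ := by
    intro τ
    rw [hQt τ, ← Matrix.star_eq_conjTranspose,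
      CStarRing.norm_mul_mem_unitary _ (Unitary.star_mem (hUCunitary τ)),
      CStarRing.norm_mem_unitary_mul _ (hUCunitary τ)]
  -- bound on the derivative
  have hderivbound : ∀ τ, ‖-Complex.I • (HC τ * Qt τ - Qt τ * HC τ)‖ ≤ 2 * ‖Q‖ * ‖HC τ‖ := by
    intro τ
    rw [norm_smul]
    simp only [norm_neg, Complex.norm_I, one_mul]
    calc ‖HC τ * Qt τ - Qt τ * HC τ‖ ≤ ‖HC τ * Qt τ‖ + ‖Qt τ * HC τ‖ := norm_sub_le _ _
      _ ≤ ‖HC τ‖ * ‖Qt τ‖ + ‖Qt τ‖ * ‖HC τ‖ := add_le_add (norm_mul_le _ _) (norm_mul_le _ _)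
      _ = 2 * ‖Q‖ * ‖HC τ‖ := by rw [hQtnorm]; ring
  have hQt0 : Qt 0 = Q := by rw [hQt 0, hUC0]; simp
  have hderivcont : Continuous (fun s => -Complex.I • (HC s * Qt s - Qt s * HC s)) :=
    ((hHCcont.mul hQtcont).sub (hQtcont.mul hHCcont)).const_smul (-Complex.I)
  -- pointwise bound on ‖Qt τ - Q‖
  have hkey : ∀ τ ∈ Set.Icc (0:ℝ) T, ‖Qt τ - Q‖ ≤ 2 * ‖Q‖ * A := by
    intro τ hτ
    obtain ⟨hτ0, hτT⟩ := hτ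
    have hftc : ∫ s in (0:ℝ)..τ, -Complex.I • (HC s * Qt s - Qt s * HC s) = Qt τ - Qt 0 :=
      intervalIntegral.integral_eq_sub_of_hasDerivAt (fun s _ => hQt' s)
        (hderivcont.intervalIntegrable _ _)
    calc ‖Qt τ - Q‖ = ‖∫ s in (0:ℝ)..τ, -Complex.I • (HC s * Qt s - Qt s * HC s)‖ := by
          rw [hftc, hQt0]
      _ ≤ ∫ s in (0:ℝ)..τ, ‖-Complex.I • (HC s * Qt s - Qt s * HC s)‖ :=
          intervalIntegral.norm_integral_le_integral_norm hτ0
      _ ≤ ∫ s in (0:ℝ)..τ, 2 * ‖Q‖ * ‖HC s‖ := by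
          apply intervalIntegral.integral_mono_on hτ0
            (hderivcont.norm.intervalIntegrable _ _)
            ((continuous_const.mul hHCcont.norm).intervalIntegrable _ _)
          exact fun s _ => hderivbound s
      _ = 2 * ‖Q‖ * ∫ s in (0:ℝ)..τ, ‖HC s‖ := intervalIntegral.integral_const_mul _ _
      _ ≤ 2 * ‖Q‖ * A := by
          apply mul_le_mul_of_nonneg_left _ (by positivity)
          apply intervalIntegral.integral_mono_interval le_rfl hτ0 hτT
          · filter_upwards with s using norm_nonneg _
          · exact hHCcont.norm.intervalIntegrable _ _
  -- ∫ (Qt - Q) = -(T • Q)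
  have hint : ∫ τ in (0:ℝ)..T, (Qt τ - Q) = -(T • Q) := by
    rw [intervalIntegral.integral_sub (hQtcont.intervalIntegrable _ _)
      (intervalIntegrable_const), hdec, intervalIntegral.integral_const]
    simp
  have hmain : T * ‖Q‖ ≤ T * (2 * ‖Q‖ * A) := by
    calc T * ‖Q‖ = ‖∫ τ in (0:ℝ)..T, (Qt τ - Q)‖ := by
          rw [hint, norm_neg, norm_smul, Real.norm_eq_abs, abs_of_pos hT]
      _ ≤ ∫ τ in (0:ℝ)..T, ‖Qt τ - Q‖ :=
          intervalIntegral.norm_integral_le_integral_norm hT.le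
      _ ≤ ∫ τ in (0:ℝ)..T, 2 * ‖Q‖ * A := by
          apply intervalIntegral.integral_mono_on hT.le
            ((hQtcont.sub continuous_const).norm.intervalIntegrable _ _)
            (intervalIntegrable_const) hkey
      _ = T * (2 * ‖Q‖ * A) := by rw [intervalIntegral.integral_const, smul_eq_mul, sub_zero]
  have h1 : ‖Q‖ ≤ 2 * ‖Q‖ * A := (mul_le_mul_iff_right₀ hT).mp hmain
  nlinarith [h1, hQnorm]
end

section
/- Let R be a unital ring, T > 0, and let u, v : [0,∞) → R be functions whose values are invertible elements of R satisfying u(s + T) = u(s)·u(T) and v(s + T) = v(s)·v(T) for all s ≥ 0, with u(0) = v(0) = 1. Define W(s) := u(s)⁻¹ v(s) − 1. Then for every n ∈ ℕ and every δ ∈ [0, T), writing t = nT + δ, one has the telescoping identity v(t) − u(t) = u(δ) W(δ) v(nT) + Σ_{k=0}^{n−1} u(δ + (n−k)T) W(T) v(kT). -/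
/-- Telescoping identity in a unital ring: if `u, v : [0,∞) → R` take invertible
values, satisfy `u(s+T) = u(s)u(T)`, `v(s+T) = v(s)v(T)` for `s ≥ 0` and `u(0) = v(0) = 1`,
and `W(s) := u(s)⁻¹ v(s) - 1`, then for `t = nT + δ` with `n ∈ ℕ`, `δ ∈ [0,T)`,
`v(t) - u(t) = u(δ) W(δ) v(nT) + ∑_{k=0}^{n-1} u(δ + (n-k)T) W(T) v(kT)`. -/
theorem telescoping_identity {R : Type*} [Ring R]
    (T : ℝ) (hT : 0 < T)
    (u v : ℝ → R)
    (hu_unit : ∀ s : ℝ, 0 ≤ s → IsUnit (u s))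
    (hv_unit : ∀ s : ℝ, 0 ≤ s → IsUnit (v s))
    (hu_coc : ∀ s : ℝ, 0 ≤ s → u (s + T) = u s * u T)
    (hv_coc : ∀ s : ℝ, 0 ≤ s → v (s + T) = v s * v T)
    (hu0 : u 0 = 1) (hv0 : v 0 = 1)
    (W : ℝ → R) (hW : ∀ s : ℝ, W s = Ring.inverse (u s) * v s - 1)
    (n : ℕ) (δ : ℝ) (hδ : δ ∈ Set.Ico (0 : ℝ) T) :
    v ((n : ℝ) * T + δ) - u ((n : ℝ) * T + δ)
      = u δ * W δ * v ((n : ℝ) * T)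
        + ∑ k ∈ Finset.range n, u (δ + ((n - k : ℕ) : ℝ) * T) * W T * v ((k : ℝ) * T) := by
  obtain ⟨hδ0, hδT⟩ := hδ
  have hTle := hT.le
  have key : ∀ (w : ℝ → R), (∀ s, 0 ≤ s → w (s + T) = w s * w T) →
      ∀ (d : ℝ), 0 ≤ d → ∀ k : ℕ, w (d + (k : ℝ) * T) = w d * w T ^ k := by
    intro w hw d hd k
    induction k with
    | zero => simp
    | succ k ih =>
      have h1 : d + ((k + 1 : ℕ) : ℝ) * T = (d + (k : ℝ) * T) + T := by push_cast; ring
      rw [h1, hw _ (by positivity), ih, pow_succ, mul_assoc]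
  have huA : ∀ k : ℕ, u (δ + (k : ℝ) * T) = u δ * u T ^ k := key u hu_coc δ hδ0
  have hvN : v ((n : ℝ) * T) = v T ^ n := by
    simpa [hv0] using key v hv_coc 0 le_rfl n
  have hvδ : v ((n : ℝ) * T + δ) = v δ * v T ^ n := by
    rw [add_comm, key v hv_coc δ hδ0 n]
  have huδ : u ((n : ℝ) * T + δ) = u δ * u T ^ n := by
    rw [add_comm, huA n]
  have hWδ : u δ * W δ = v δ - u δ := by
    rw [hW, mul_sub, mul_one, ← mul_assoc, Ring.mul_inverse_cancel _ (hu_unit δ hδ0), one_mul]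
  have hWT : u T * W T = v T - u T := by
    rw [hW, mul_sub, mul_one, ← mul_assoc, Ring.mul_inverse_cancel _ (hu_unit T hTle), one_mul]
  have hsum : ∑ k ∈ Finset.range n, u (δ + ((n - k : ℕ) : ℝ) * T) * W T * v ((k : ℝ) * T)
      = u δ * (v T ^ n - u T ^ n) := by
    have hterm : ∀ k ∈ Finset.range n,
        u (δ + ((n - k : ℕ) : ℝ) * T) * W T * v ((k : ℝ) * T)
          = u δ * (u T ^ (n - (k + 1)) * v T ^ (k + 1) - u T ^ (n - k) * v T ^ k) := by
      intro k hk
      have hk' : k < n := Finset.mem_range.mp hk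
      have hvk : v ((k : ℝ) * T) = v T ^ k := by
        simpa [hv0] using key v hv_coc 0 le_rfl k
      have hpow : u T ^ (n - k) = u T ^ (n - (k + 1)) * u T := by
        rw [← pow_succ]
        congr 1
        omega
      rw [huA, hvk, hpow]
      calc u δ * (u T ^ (n - (k + 1)) * u T) * W T * v T ^ k
          = u δ * u T ^ (n - (k + 1)) * (u T * W T) * v T ^ k := by noncomm_ring
        _ = u δ * u T ^ (n - (k + 1)) * (v T - u T) * v T ^ k := by rw [hWT]
        _ = u δ * (u T ^ (n - (k + 1)) * v T ^ (k + 1)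
              - (u T ^ (n - (k + 1)) * u T) * v T ^ k) := by
            rw [pow_succ']
            noncomm_ring
        _ = _ := by rw [← hpow]
    rw [Finset.sum_congr rfl hterm, ← Finset.mul_sum]
    congr 1
    simpa using Finset.sum_range_sub (fun k => u T ^ (n - k) * v T ^ k) n
  rw [hvδ, huδ, hWδ, hvN, hsum]
  noncomm_ring
end

section
/- Let 𝓗 be a complex Hilbert space, V ∈ B(𝓗) a bounded self-adjoint operator, and let H₀, K : ℝ → B(𝓗) be norm-continuous families of bounded self-adjoint operators with differentiable unitary propagators U₀, U_K satisfying U₀'(t) = −i H₀(t) U₀(t), U_K'(t) = −i K(t) U_K(t), U₀(0) = U_K(0) = 𝟙. Assume the decoupling condition ∫₀ᵀ U_K(s)* V U_K(s) ds = 0 for some T > 0. Then ∫₀ᵀ U₀(s)* V U₀(s) ds = i ∫₀ᵀ ∫₀ˢ { U₀(r)* [H₀(r), V] U₀(r) − U_K(r)* [K(r), V] U_K(r) } dr ds, where [A,B] = AB − BA. -/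
open intervalIntegral

lemma conj_evol_deriv
    {𝓗 : Type*} [NormedAddCommGroup 𝓗] [InnerProductSpace ℂ 𝓗] [CompleteSpace 𝓗]
    (V : 𝓗 →L[ℂ] 𝓗)
    (H : ℝ → 𝓗 →L[ℂ] 𝓗) (hHsa : ∀ t, IsSelfAdjoint (H t))
    (U : ℝ → 𝓗 →L[ℂ] 𝓗)
    (hU' : ∀ t : ℝ, HasDerivAt U (-Complex.I • (H t * U t)) t) (t : ℝ) :
    HasDerivAt (fun s => star (U s) * V * U s)
      (Complex.I • (star (U t) * (H t * V - V * H t) * U t)) t := by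
  have h1 : HasDerivAt (fun s => star (U s)) (Complex.I • (star (U t) * H t)) t := by
    have h := (hU' t).star
    refine h.congr_deriv (Eq.symm ?_)
    rw [star_smul, star_mul, (hHsa t).star_eq]
    simp
  have h2 := (h1.mul_const V).mul (hU' t)
  refine h2.congr_deriv (Eq.symm ?_)
  simp only [smul_mul_assoc, mul_smul_comm, neg_smul, smul_sub, mul_sub, sub_mul,
    mul_assoc]
  abel_nf
  simp [mul_smul_comm, smul_smul]

/-- The key identity exploiting the decoupling condition: if
`∫₀ᵀ U_K(s)* V U_K(s) ds = 0` then
`∫₀ᵀ U₀(s)* V U₀(s) ds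
  = i ∫₀ᵀ ∫₀ˢ { U₀(r)* [H₀(r),V] U₀(r) - U_K(r)* [K(r),V] U_K(r) } dr ds`. -/
theorem key_decoupling_identity
    {𝓗 : Type*} [NormedAddCommGroup 𝓗] [InnerProductSpace ℂ 𝓗] [CompleteSpace 𝓗]
    (V : 𝓗 →L[ℂ] 𝓗) (hV : IsSelfAdjoint V)
    (H₀ K : ℝ → 𝓗 →L[ℂ] 𝓗)
    (hH₀cont : Continuous H₀) (hKcont : Continuous K)
    (hH₀sa : ∀ t, IsSelfAdjoint (H₀ t)) (hKsa : ∀ t, IsSelfAdjoint (K t))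
    (U₀ UK : ℝ → 𝓗 →L[ℂ] 𝓗)
    (hU₀unitary : ∀ t, U₀ t ∈ unitary (𝓗 →L[ℂ] 𝓗))
    (hUKunitary : ∀ t, UK t ∈ unitary (𝓗 →L[ℂ] 𝓗))
    (hU₀' : ∀ t : ℝ, HasDerivAt U₀ (-Complex.I • (H₀ t * U₀ t)) t)
    (hUK' : ∀ t : ℝ, HasDerivAt UK (-Complex.I • (K t * UK t)) t)
    (hU₀0 : U₀ 0 = 1) (hUK0 : UK 0 = 1)
    (T : ℝ) (hT : 0 < T)
    (hdec : ∫ s in (0 : ℝ)..T, star (UK s) * V * UK s = 0) :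
    ∫ s in (0 : ℝ)..T, star (U₀ s) * V * U₀ s
      = Complex.I • ∫ s in (0 : ℝ)..T, ∫ r in (0 : ℝ)..s,
          (star (U₀ r) * (H₀ r * V - V * H₀ r) * U₀ r
            - star (UK r) * (K r * V - V * K r) * UK r) := by
  set G : ℝ → 𝓗 →L[ℂ] 𝓗 := fun r =>
    star (U₀ r) * (H₀ r * V - V * H₀ r) * U₀ r
      - star (UK r) * (K r * V - V * K r) * UK r with hG
  have hU₀c : Continuous U₀ := by
    have h : Differentiable ℝ U₀ := fun t => (hU₀' t).differentiableAt
    exact h.continuous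
  have hUKc : Continuous UK := by
    have h : Differentiable ℝ UK := fun t => (hUK' t).differentiableAt
    exact h.continuous
  have hGc : Continuous G := by
    apply Continuous.sub
    · exact (hU₀c.star.mul ((hH₀cont.mul continuous_const).sub
        (continuous_const.mul hH₀cont))).mul hU₀c
    · exact (hUKc.star.mul ((hKcont.mul continuous_const).sub
        (continuous_const.mul hKcont))).mul hUKc
  have hD : ∀ s : ℝ, star (U₀ s) * V * U₀ s - star (UK s) * V * UK s
      = ∫ r in (0:ℝ)..s, Complex.I • G r := by
    intro s
    have key := integral_eq_sub_of_hasDerivAt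
      (f := fun u => star (U₀ u) * V * U₀ u - star (UK u) * V * UK u)
      (f' := fun u => Complex.I • G u) (a := 0) (b := s)
      (fun x _ => by
        have h := (conj_evol_deriv V H₀ hH₀sa U₀ hU₀' x).sub
          (conj_evol_deriv V K hKsa UK hUK' x)
        simp only [hG, smul_sub]; exact h)
      ((show Continuous fun u => Complex.I • G u by fun_prop).intervalIntegrable 0 s)
    rw [key]
    simp [hU₀0, hUK0]
  have hint₀ : IntervalIntegrable (fun s => star (U₀ s) * V * U₀ s)
      MeasureTheory.volume 0 T :=
    ((hU₀c.star.mul continuous_const).mul hU₀c).intervalIntegrable 0 T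
  have hintK : IntervalIntegrable (fun s => star (UK s) * V * UK s)
      MeasureTheory.volume 0 T :=
    ((hUKc.star.mul continuous_const).mul hUKc).intervalIntegrable 0 T
  calc ∫ s in (0:ℝ)..T, star (U₀ s) * V * U₀ s
      = ∫ s in (0:ℝ)..T, (star (U₀ s) * V * U₀ s - star (UK s) * V * UK s) := by
        rw [integral_sub hint₀ hintK, hdec, sub_zero]
    _ = ∫ s in (0:ℝ)..T, ∫ r in (0:ℝ)..s, Complex.I • G r :=
        integral_congr (fun s _ => hD s)
    _ = Complex.I • ∫ s in (0:ℝ)..T, ∫ r in (0:ℝ)..s, G r := by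
        simp only [integral_smul]
end

section
/- Let 𝓗 be a complex Hilbert space, V ∈ B(𝓗) a bounded self-adjoint operator, and let H₀, K : ℝ → B(𝓗) be norm-continuous families of bounded self-adjoint operators with differentiable unitary propagators U₀, U_K satisfying U₀'(t) = −i H₀(t) U₀(t), U_K'(t) = −i K(t) U_K(t), U₀(0) = U_K(0) = 𝟙. Assume the decoupling condition ∫₀ᵀ U_K(s)* V U_K(s) ds = 0 for some T > 0. Then ‖ ∫₀ᵀ U₀(s)* V U₀(s) ds ‖ ≤ T² ‖V‖ ( sup_{0≤r≤T} ‖H₀(r)‖ + sup_{0≤r≤T} ‖K(r)‖ ). -/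
open intervalIntegral

lemma aux_le_biSup {a b : ℝ} (g : ℝ → ℝ) (hg : Continuous g)
    {s : ℝ} (hs : s ∈ Set.Icc a b) :
    g s ≤ ⨆ r ∈ Set.Icc a b, g r := by
  obtain ⟨M, hM⟩ := (isCompact_Icc.image_of_continuousOn hg.continuousOn).bddAbove
  have hbdd : BddAbove (Set.range fun r => ⨆ _ : r ∈ Set.Icc a b, g r) := by
    refine ⟨max M 0, ?_⟩
    rintro x ⟨r, rfl⟩
    by_cases hr : r ∈ Set.Icc a b
    · show (⨆ _ : r ∈ Set.Icc a b, g r) ≤ max M 0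
      rw [ciSup_pos (f := fun _ => g r) hr]
      exact le_max_of_le_left (hM ⟨r, hr, rfl⟩)
    · show (⨆ _ : r ∈ Set.Icc a b, g r) ≤ max M 0
      have : IsEmpty (r ∈ Set.Icc a b) := ⟨hr⟩
      rw [Real.iSup_of_isEmpty]
      exact le_max_right _ _
  calc g s = ⨆ _ : s ∈ Set.Icc a b, g s := (ciSup_pos (f := fun _ => g s) hs).symm
    _ ≤ _ := le_ciSup hbdd s

lemma aux_unitary_norm_le {𝓗 : Type*} [NormedAddCommGroup 𝓗] [InnerProductSpace ℂ 𝓗]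
    [CompleteSpace 𝓗] {U : 𝓗 →L[ℂ] 𝓗} (hU : U ∈ unitary (𝓗 →L[ℂ] 𝓗)) : ‖U‖ ≤ 1 := by
  have h1 : star U * U = 1 := hU.1
  have h2 : ‖U‖ * ‖U‖ = ‖star U * U‖ := (CStarRing.norm_star_mul_self).symm
  rw [h1] at h2
  have h3 : ‖(1 : 𝓗 →L[ℂ] 𝓗)‖ ≤ 1 := ContinuousLinearMap.norm_id_le
  nlinarith [norm_nonneg U]

lemma aux_norm_mul3_le {A : Type*} [NonUnitalSeminormedRing A] (a b c : A) :
    ‖a * b * c‖ ≤ ‖a‖ * ‖b‖ * ‖c‖ :=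
  (norm_mul_le _ _).trans (mul_le_mul_of_nonneg_right (norm_mul_le _ _) (norm_nonneg _))

/-- The key estimate from the decoupling condition: if
`∫₀ᵀ U_K(s)* V U_K(s) ds = 0` then
`‖∫₀ᵀ U₀(s)* V U₀(s) ds‖ ≤ T² ‖V‖ (sup_{0≤r≤T} ‖H₀(r)‖ + sup_{0≤r≤T} ‖K(r)‖)`. -/
theorem key_decoupling_estimate
    {𝓗 : Type*} [NormedAddCommGroup 𝓗] [InnerProductSpace ℂ 𝓗] [CompleteSpace 𝓗]
    (V : 𝓗 →L[ℂ] 𝓗) (hV : IsSelfAdjoint V)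
    (H₀ K : ℝ → 𝓗 →L[ℂ] 𝓗)
    (hH₀cont : Continuous H₀) (hKcont : Continuous K)
    (hH₀sa : ∀ t, IsSelfAdjoint (H₀ t)) (hKsa : ∀ t, IsSelfAdjoint (K t))
    (U₀ UK : ℝ → 𝓗 →L[ℂ] 𝓗)
    (hU₀unitary : ∀ t, U₀ t ∈ unitary (𝓗 →L[ℂ] 𝓗))
    (hUKunitary : ∀ t, UK t ∈ unitary (𝓗 →L[ℂ] 𝓗))
    (hU₀' : ∀ t : ℝ, HasDerivAt U₀ (-Complex.I • (H₀ t * U₀ t)) t)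
    (hUK' : ∀ t : ℝ, HasDerivAt UK (-Complex.I • (K t * UK t)) t)
    (hU₀0 : U₀ 0 = 1) (hUK0 : UK 0 = 1)
    (T : ℝ) (hT : 0 < T)
    (hdec : ∫ s in (0 : ℝ)..T, star (UK s) * V * UK s = 0) :
    ‖∫ s in (0 : ℝ)..T, star (U₀ s) * V * U₀ s‖
      ≤ T ^ 2 * ‖V‖ *
        ((⨆ r ∈ Set.Icc (0 : ℝ) T, ‖H₀ r‖) + ⨆ r ∈ Set.Icc (0 : ℝ) T, ‖K r‖) := by
  set M₀ : ℝ := ⨆ r ∈ Set.Icc (0 : ℝ) T, ‖H₀ r‖ with hM₀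
  set MK : ℝ := ⨆ r ∈ Set.Icc (0 : ℝ) T, ‖K r‖ with hMK
  set C : ℝ := 2 * ‖V‖ * (M₀ + MK) with hC
  set f : ℝ → 𝓗 →L[ℂ] 𝓗 := fun s => star (U₀ s) * V * U₀ s - star (UK s) * V * UK s with hf
  set D : ℝ → 𝓗 →L[ℂ] 𝓗 := fun s =>
    ((star (-Complex.I • (H₀ s * U₀ s)) * V) * U₀ s
      + (star (U₀ s) * V) * (-Complex.I • (H₀ s * U₀ s)))
    - ((star (-Complex.I • (K s * UK s)) * V) * UK s
      + (star (UK s) * V) * (-Complex.I • (K s * UK s))) with hD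
  have hfderiv : ∀ s, HasDerivAt f (D s) s := by
    intro s
    exact ((((hU₀' s).star).mul_const V).mul (hU₀' s)).sub
      ((((hUK' s).star).mul_const V).mul (hUK' s))
  have hDbound : ∀ s ∈ Set.Icc (0 : ℝ) T, ‖D s‖ ≤ C := by
    intro s hs
    have hU₀n : ‖U₀ s‖ ≤ 1 := aux_unitary_norm_le (hU₀unitary s)
    have hUKn : ‖UK s‖ ≤ 1 := aux_unitary_norm_le (hUKunitary s)
    have hsmul₀ : ‖(-Complex.I : ℂ) • (H₀ s * U₀ s)‖ ≤ ‖H₀ s‖ := by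
      rw [norm_smul]
      simp only [norm_neg, Complex.norm_I, one_mul]
      calc ‖H₀ s * U₀ s‖ ≤ ‖H₀ s‖ * ‖U₀ s‖ := norm_mul_le _ _
        _ ≤ ‖H₀ s‖ * 1 := by gcongr
        _ = ‖H₀ s‖ := mul_one _
    have hsmulK : ‖(-Complex.I : ℂ) • (K s * UK s)‖ ≤ ‖K s‖ := by
      rw [norm_smul]
      simp only [norm_neg, Complex.norm_I, one_mul]
      calc ‖K s * UK s‖ ≤ ‖K s‖ * ‖UK s‖ := norm_mul_le _ _
        _ ≤ ‖K s‖ * 1 := by gcongr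
        _ = ‖K s‖ := mul_one _
    have hterm₀ : ‖(star (-Complex.I • (H₀ s * U₀ s)) * V) * U₀ s
        + (star (U₀ s) * V) * (-Complex.I • (H₀ s * U₀ s))‖ ≤ 2 * ‖V‖ * ‖H₀ s‖ := by
      calc ‖(star (-Complex.I • (H₀ s * U₀ s)) * V) * U₀ s
            + (star (U₀ s) * V) * (-Complex.I • (H₀ s * U₀ s))‖
          ≤ ‖star (-Complex.I • (H₀ s * U₀ s))‖ * ‖V‖ * ‖U₀ s‖
            + ‖star (U₀ s)‖ * ‖V‖ * ‖(-Complex.I • (H₀ s * U₀ s))‖ :=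
            (norm_add_le _ _).trans (add_le_add (aux_norm_mul3_le _ _ _) (aux_norm_mul3_le _ _ _))
        _ ≤ ‖H₀ s‖ * ‖V‖ * 1 + 1 * ‖V‖ * ‖H₀ s‖ := by
            rw [norm_star, norm_star]; gcongr
        _ = 2 * ‖V‖ * ‖H₀ s‖ := by ring
    have htermK : ‖(star (-Complex.I • (K s * UK s)) * V) * UK s
        + (star (UK s) * V) * (-Complex.I • (K s * UK s))‖ ≤ 2 * ‖V‖ * ‖K s‖ := by
      calc ‖(star (-Complex.I • (K s * UK s)) * V) * UK s
            + (star (UK s) * V) * (-Complex.I • (K s * UK s))‖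
          ≤ ‖star (-Complex.I • (K s * UK s))‖ * ‖V‖ * ‖UK s‖
            + ‖star (UK s)‖ * ‖V‖ * ‖(-Complex.I • (K s * UK s))‖ :=
            (norm_add_le _ _).trans (add_le_add (aux_norm_mul3_le _ _ _) (aux_norm_mul3_le _ _ _))
        _ ≤ ‖K s‖ * ‖V‖ * 1 + 1 * ‖V‖ * ‖K s‖ := by
            rw [norm_star, norm_star]; gcongr
        _ = 2 * ‖V‖ * ‖K s‖ := by ring
    have hHsup : ‖H₀ s‖ ≤ M₀ := aux_le_biSup _ hH₀cont.norm hs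
    have hKsup : ‖K s‖ ≤ MK := aux_le_biSup _ hKcont.norm hs
    have hM₀nn : (0:ℝ) ≤ M₀ := (norm_nonneg _).trans hHsup
    have hMKnn : (0:ℝ) ≤ MK := (norm_nonneg _).trans hKsup
    calc ‖D s‖ ≤ 2 * ‖V‖ * ‖H₀ s‖ + 2 * ‖V‖ * ‖K s‖ :=
          (norm_sub_le _ _).trans (add_le_add hterm₀ htermK)
      _ ≤ 2 * ‖V‖ * M₀ + 2 * ‖V‖ * MK := by gcongr
      _ = C := by rw [hC]; ring
  have hf0 : f 0 = 0 := by simp [hf, hU₀0, hUK0]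
  have hfs : ∀ s ∈ Set.Icc (0 : ℝ) T, ‖f s‖ ≤ C * s := by
    intro s hs
    have := (convex_Icc (0 : ℝ) T).norm_image_sub_le_of_norm_hasDerivWithin_le
      (fun x _ => (hfderiv x).hasDerivWithinAt) hDbound
      (Set.left_mem_Icc.2 hT.le) hs
    rw [hf0] at this
    simpa [abs_of_nonneg hs.1] using this
  have hU₀c : Continuous U₀ := continuous_iff_continuousAt.2 fun x => (hU₀' x).continuousAt
  have hUKc : Continuous UK := continuous_iff_continuousAt.2 fun x => (hUK' x).continuousAt
  have hP₀c : Continuous (fun s => star (U₀ s) * V * U₀ s) :=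
    (hU₀c.star.mul continuous_const).mul hU₀c
  have hPKc : Continuous (fun s => star (UK s) * V * UK s) :=
    (hUKc.star.mul continuous_const).mul hUKc
  have hfc : Continuous f := hP₀c.sub hPKc
  have hintf : (∫ s in (0:ℝ)..T, star (U₀ s) * V * U₀ s) = ∫ s in (0:ℝ)..T, f s := by
    rw [hf, intervalIntegral.integral_sub (hP₀c.intervalIntegrable _ _)
      (hPKc.intervalIntegrable _ _), hdec, sub_zero]
  rw [hintf]
  have hCnn : 0 ≤ C := by
    have h0T : (0:ℝ) ∈ Set.Icc (0:ℝ) T := Set.left_mem_Icc.2 hT.le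
    have h1 : (0:ℝ) ≤ M₀ := (norm_nonneg _).trans (aux_le_biSup _ hH₀cont.norm h0T)
    have h2 : (0:ℝ) ≤ MK := (norm_nonneg _).trans (aux_le_biSup _ hKcont.norm h0T)
    rw [hC]; positivity
  have hnorm : ‖∫ s in (0:ℝ)..T, f s‖ ≤ |∫ s in (0:ℝ)..T, C * s| := by
    apply intervalIntegral.norm_integral_le_abs_of_norm_le
    · filter_upwards [MeasureTheory.ae_restrict_mem measurableSet_Ioc] with t ht
      rw [Set.uIoc_of_le hT.le] at ht
      exact hfs t ⟨ht.1.le, ht.2⟩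
    · exact (continuous_const.mul continuous_id).intervalIntegrable _ _
  have hval : (∫ s in (0:ℝ)..T, C * s) = C * (T ^ 2 / 2) := by
    rw [intervalIntegral.integral_const_mul, integral_id]
    ring
  rw [hval, abs_of_nonneg (by positivity)] at hnorm
  calc ‖∫ s in (0:ℝ)..T, f s‖ ≤ C * (T ^ 2 / 2) := hnorm
    _ = T ^ 2 * ‖V‖ * (M₀ + MK) := by rw [hC]; ring
end
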